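/- Let Z, M: [R_3, ∞) → ℝ with Z positive, nondecreasing, differentiable, and Z(R)² ≤ C Z'(R) M(R) for R > R_3, with M(R) ≤ C' R^{σ+1} for constants C, C', σ > 0. If moreover ∫_R^∞ M(r)^{-1} dr ≥ c R^{-σ} for some c > 0, then Z(R) ≤ (C/c) R^σ for all R ≥ R_3. -/
import Mathlib


open MeasureTheory

namespace Stmt12

/-- Upper-bound step of Jin's method: if `Z` is positive, nondecreasing and
differentiable on `[R₃, ∞)` with `Z(R)² ≤ C Z'(R) M(R)`, `M(R) ≤ C' R^{σ+1}`, and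
`∫_R^∞ M(r)⁻¹ dr ≥ c R^{-σ}`, then `Z(R) ≤ (C/c) R^σ` for all `R ≥ R₃`. -/
theorem jin_upper_bound
    (C C' c σ R₃ : ℝ) (hC : 0 < C) (hC' : 0 < C') (hc : 0 < c) (hσ : 0 < σ)
    (hR₃ : 0 < R₃)
    (Z Z' M : ℝ → ℝ)
    (hZpos : ∀ R, R₃ ≤ R → 0 < Z R)
    (hZmono : MonotoneOn Z (Set.Ici R₃))
    (hZderiv : ∀ R, R₃ < R → HasDerivAt Z (Z' R) R)
    (hZineq : ∀ R, R₃ < R → (Z R) ^ 2 ≤ C * Z' R * M R)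
    (hMpos : ∀ R, R₃ ≤ R → 0 < M R)
    (hMbound : ∀ R, R₃ ≤ R → M R ≤ C' * R ^ (σ + 1))
    (hint : ∀ R, R₃ ≤ R → c * R ^ (-σ) ≤ ∫ r in Set.Ioi R, (M r)⁻¹) :
    ∀ R, R₃ ≤ R → Z R ≤ (C / c) * R ^ σ := by
  -- integrability of M⁻¹ on Ioi R for R ≥ R₃
  have hIntble : ∀ R, R₃ ≤ R → IntegrableOn (fun r => (M r)⁻¹) (Set.Ioi R) := by
    intro R hR
    by_contra h
    have h0 : (∫ r in Set.Ioi R, (M r)⁻¹) = 0 := integral_undef h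
    have := hint R hR
    rw [h0] at this
    have hRpos : 0 < R := hR₃.trans_le hR
    nlinarith [Real.rpow_pos_of_pos hRpos (-σ), mul_pos hc (Real.rpow_pos_of_pos hRpos (-σ))]
  -- the main estimate for R > R₃
  have key : ∀ R, R₃ < R → Z R ≤ (C / c) * R ^ σ := by
    intro R hR
    have hRpos : 0 < R := hR₃.trans hR
    have hZR : 0 < Z R := hZpos R hR.le
    -- For every S ≥ R we have ∫_{Ioc R S} M⁻¹ ≤ C / Z R
    have step : ∀ S, R ≤ S → (∫ r in Set.Ioc R S, (M r)⁻¹) ≤ C / Z R := by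
      intro S hS
      set g : ℝ → ℝ := fun r => -(C * (Z r)⁻¹) with hg
      have hgderiv : ∀ x ∈ Set.Ioo R S, HasDerivWithinAt g (C * Z' x / (Z x) ^ 2) (Set.Ioi x) x := by
        intro x hx
        have hx3 : R₃ < x := hR.trans hx.1
        have hZx : Z x ≠ 0 := (hZpos x hx3.le).ne'
        have h1 : HasDerivAt (fun r => (Z r)⁻¹) (-Z' x / (Z x) ^ 2) x :=
          (hZderiv x hx3).inv hZx
        have h2 : HasDerivAt g (-(C * (-Z' x / (Z x) ^ 2))) x := (h1.const_mul C).neg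
        have h3 : -(C * (-Z' x / (Z x) ^ 2)) = C * Z' x / (Z x) ^ 2 := by ring
        exact (h3 ▸ h2).hasDerivWithinAt
      have hgcont : ContinuousOn g (Set.Icc R S) := by
        intro x hx
        have hx3 : R₃ < x := hR.trans_le hx.1
        have : HasDerivAt g (-(C * (-Z' x / (Z x) ^ 2))) x :=
          (((hZderiv x hx3).inv (hZpos x hx3.le).ne').const_mul C).neg
        exact this.continuousAt.continuousWithinAt
      have hφint : IntegrableOn (fun r => (M r)⁻¹) (Set.Icc R S) :=
        (hIntble R₃ le_rfl).mono_set fun x hx => lt_of_lt_of_le hR hx.1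
      have hφg : ∀ x ∈ Set.Ioo R S, (M x)⁻¹ ≤ C * Z' x / (Z x) ^ 2 := by
        intro x hx
        have hx3 : R₃ < x := hR.trans hx.1
        have hMx : 0 < M x := hMpos x hx3.le
        have hZx : 0 < Z x := hZpos x hx3.le
        rw [inv_eq_one_div, div_le_div_iff₀ hMx (by positivity)]
        nlinarith [hZineq x hx3]
      have hineq := intervalIntegral.integral_le_sub_of_hasDeriv_right_of_le hS hgcont hgderiv
        hφint hφg
      rw [intervalIntegral.integral_of_le hS] at hineq
      have hZS : 0 < Z S := hZpos S (hR.le.trans hS)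
      have : g S - g R = C / Z R - C / Z S := by
        simp only [hg]; field_simp; ring
      rw [this] at hineq
      have : 0 < C / Z S := by positivity
      linarith
    -- take S → ∞
    have hsm : ∀ n : ℕ, MeasurableSet (Set.Ioc R (R + n)) := fun n => measurableSet_Ioc
    have hmono : Monotone (fun n : ℕ => Set.Ioc R (R + n)) := by
      intro m n hmn
      have : (m:ℝ) ≤ n := by exact_mod_cast hmn
      exact Set.Ioc_subset_Ioc le_rfl (by linarith)
    have hunion : (⋃ n : ℕ, Set.Ioc R (R + n)) = Set.Ioi R := by
      ext x
      simp only [Set.mem_iUnion, Set.mem_Ioc, Set.mem_Ioi]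
      constructor
      · rintro ⟨n, h1, _⟩; exact h1
      · intro hx
        refine ⟨⌈x - R⌉₊, hx, ?_⟩
        have := Nat.le_ceil (x - R)
        linarith
    have hIR : IntegrableOn (fun r => (M r)⁻¹) (⋃ n : ℕ, Set.Ioc R (R + n)) := by
      rw [hunion]; exact hIntble R hR.le
    have htend := tendsto_setIntegral_of_monotone hsm hmono hIR
    rw [hunion] at htend
    have hlim : (∫ r in Set.Ioi R, (M r)⁻¹) ≤ C / Z R := by
      refine le_of_tendsto htend (Filter.Eventually.of_forall fun n => ?_)
      exact step (R + n) (le_add_of_nonneg_right (Nat.cast_nonneg n))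
    have h1 : c * R ^ (-σ) ≤ C / Z R := (hint R hR.le).trans hlim
    have hrp : (0:ℝ) < R ^ (-σ) := Real.rpow_pos_of_pos hRpos _
    have h2 : Z R * (c * R ^ (-σ)) ≤ C := by
      calc Z R * (c * R ^ (-σ)) ≤ Z R * (C / Z R) := mul_le_mul_of_nonneg_left h1 hZR.le
        _ = C := by field_simp
    have hrs : R ^ (-σ) = (R ^ σ)⁻¹ := by
      rw [Real.rpow_neg hRpos.le]
    rw [hrs] at h2
    have hRσ : (0:ℝ) < R ^ σ := Real.rpow_pos_of_pos hRpos _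
    rw [div_mul_eq_mul_div, le_div_iff₀ hc]
    calc Z R * c = (Z R * (c * (R ^ σ)⁻¹)) * R ^ σ := by
          field_simp
      _ ≤ C * R ^ σ := mul_le_mul_of_nonneg_right h2 hRσ.le
  -- the case R = R₃ by continuity from the right
  intro R hR
  rcases eq_or_lt_of_le hR with heq | hlt
  · subst heq
    have hcont : ContinuousAt (fun x : ℝ => (C / c) * x ^ σ) R₃ :=
      ContinuousAt.mul continuousAt_const
        (Real.continuousAt_rpow_const R₃ σ (Or.inl hR₃.ne'))
    have htend : Filter.Tendsto (fun x : ℝ => (C / c) * x ^ σ) (nhdsWithin R₃ (Set.Ioi R₃))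
        (nhds ((C / c) * R₃ ^ σ)) := hcont.continuousWithinAt
    refine ge_of_tendsto htend ?_
    filter_upwards [self_mem_nhdsWithin] with x hx
    exact le_trans (hZmono (Set.mem_Ici.mpr le_rfl) (Set.mem_Ici.mpr (le_of_lt hx)) (le_of_lt hx))
      (key x hx)
  · exact key R hlt

end Stmt12
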